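/- For every β > 0, every σ ∈ Ω, and every x ∈ V, the Digital Annealer spin-flip probability decomposes as P_β^{DA}(σ, σ^x) = (1/|V|) e^{-β E_x(σ)^+} + ∑_{S⊆V, S∋x} (1/|S| - 1/|V|) ∏_{y∈S} e^{-β E_y(σ)^+} ∏_{y∈V∖S} (1 - e^{-β E_y(σ)^+}), and the second summand on the right-hand side is nonnegative. -/

import Mathlib

open Finset Filter
open scoped Classical

noncomputable section

/-- The real spin value of a Boolean spin: `true ↦ +1`, `false ↦ -1`. -/
def spin (b : Bool) : ℝ := if b then 1 else -1

variable {V : Type*} [Fintype V] [DecidableEq V]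

/-- The configuration obtained from `σ` by flipping the spin at `x`. -/
def flipConf (σ : V → Bool) (x : V) : V → Bool := Function.update σ x (!(σ x))

/-- The Ising Hamiltonian with couplings `J` and external fields `h`. -/
def Ham (J : V → V → ℝ) (h : V → ℝ) (σ : V → Bool) : ℝ :=
  -(1 / 2) * ∑ x : V, ∑ y : V, J x y * spin (σ x) * spin (σ y)
    - ∑ x : V, h x * spin (σ x)

/-- `Ecost J h x σ = H(σ^x) - H(σ)`, the energetic cost of flipping the spin at `x`. -/
def Ecost (J : V → V → ℝ) (h : V → ℝ) (x : V) (σ : V → Bool) : ℝ :=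
  Ham J h (flipConf σ x) - Ham J h σ

/-- Metropolis acceptance probability `exp(-β E_y(σ)^+)`. -/
def acc (J : V → V → ℝ) (h : V → ℝ) (β : ℝ) (σ : V → Bool) (y : V) : ℝ :=
  Real.exp (-β * max (Ecost J h y σ) 0)

/-- The Digital Annealer transition matrix. -/
def Pda (J : V → V → ℝ) (h : V → ℝ) (β : ℝ) (σ τ : V → Bool) : ℝ :=
  if τ = σ then ∏ y : V, (1 - acc J h β σ y)
  else ∑ x ∈ Finset.univ.filter (fun x => τ = flipConf σ x),
        ∑ S ∈ Finset.univ.powerset.filter (fun S : Finset V => x ∈ S),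
          ((S.card : ℝ))⁻¹ * (∏ y ∈ S, acc J h β σ y) * ∏ y ∈ Sᶜ, (1 - acc J h β σ y)

/-- The Gibbs distribution at inverse temperature `β`. -/
def gibbs (J : V → V → ℝ) (h : V → ℝ) (β : ℝ) (σ : V → Bool) : ℝ :=
  Real.exp (-β * Ham J h σ) / ∑ τ : V → Bool, Real.exp (-β * Ham J h τ)

/-- The quantity `R(σ, σ^x)` from the paper. -/
def Rw (J : V → V → ℝ) (h : V → ℝ) (β : ℝ) (σ : V → Bool) (x : V) : ℝ :=
  ∑ S ∈ (Finset.univ.erase x).powerset,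
    ((S.card : ℝ) + 1)⁻¹ * (∏ y ∈ S, acc J h β σ y) *
      ∏ y ∈ (Finset.univ.erase x) \ S, (1 - acc J h β σ y)

/-- `τ` is reachable from `σ` at height `E`. -/
def Reachable (H : (V → Bool) → ℝ) (E : ℝ) (σ τ : V → Bool) : Prop :=
  (σ = τ ∧ H σ ≤ E) ∨
    ∃ n : ℕ, 1 ≤ n ∧ ∃ p : ℕ → (V → Bool), p 0 = σ ∧ p n = τ ∧
      (∀ k, 1 ≤ k → k ≤ n → ∃ x, p k = flipConf (p (k - 1)) x) ∧
      (∀ i ≤ n, H (p i) ≤ E)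

/-- `σ` is a local minimum of `H`. -/
def IsLocMin (H : (V → Bool) → ℝ) (σ : V → Bool) : Prop :=
  ¬ ∃ τ, H τ < H σ ∧ Reachable H (H σ) σ τ

/-- `σ` is a ground state (global minimum) of `H`. -/
def IsGround (H : (V → Bool) → ℝ) (σ : V → Bool) : Prop := ∀ τ, H σ ≤ H τ

/-- The depth of a local minimum which is not a ground state: the smallest `E > 0` such
that some strictly lower state is reachable from `σ` at height `H(σ) + E`. -/
def depth (H : (V → Bool) → ℝ) (σ : V → Bool) : ℝ :=
  sInf {E : ℝ | 0 < E ∧ ∃ τ, H τ < H σ ∧ Reachable H (H σ + E) σ τ}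

/-- `γ*`: the maximum of the depths of the local minima of `H` that are not ground
states (`0` if every local minimum is a ground state). -/
def gammaStar (H : (V → Bool) → ℝ) : ℝ :=
  sSup ({0} ∪ {d : ℝ | ∃ σ, IsLocMin H σ ∧ ¬ IsGround H σ ∧ d = depth H σ})

end

/-!
The flip `σ ↦ σ^x` can only come from the proposal `x`, so `P(σ, σ^x)` is the sum over the
accepted sets `S ∋ x`. The Bernoulli weights `∏_S a ∏_{Sᶜ} (1 - a)` of the sets containing `x`
add up to the marginal acceptance probability `a x = e^{-β E_x(σ)^+}`; splitting
`1/|S| = 1/|V| + (1/|S| - 1/|V|)` gives the decomposition, and the remainder is nonnegative since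
`|S| ≤ |V|` and every acceptance probability lies in `[0, 1]`.
-/

section BernoulliWeights

variable {ι : Type*} [Fintype ι] [DecidableEq ι]

theorem sum_filter_mem_prod_mul_prod_compl_one_sub {R : Type*} [CommRing R] (a : ι → R) (x : ι) :
    ∑ S ∈ univ.powerset.filter (fun S : Finset ι => x ∈ S),
      (∏ y ∈ S, a y) * ∏ y ∈ Sᶜ, (1 - a y) = a x := by
  -- Replacing `1 - a x` by `0` kills the sets without `x`, leaving a full binomial expansion.
  set g : ι → R := fun y => if y = x then 0 else 1 - a y
  have hg : ∀ S : Finset ι, x ∈ S → ∏ y ∈ Sᶜ, g y = ∏ y ∈ Sᶜ, (1 - a y) := fun S hx =>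
    prod_congr rfl fun y hy => if_neg fun (hyx : y = x) => mem_compl.mp hy (hyx ▸ hx)
  calc ∑ S ∈ univ.powerset.filter (fun S : Finset ι => x ∈ S),
        (∏ y ∈ S, a y) * ∏ y ∈ Sᶜ, (1 - a y)
      = ∑ S ∈ univ.powerset.filter (fun S : Finset ι => x ∈ S), (∏ y ∈ S, a y) * ∏ y ∈ Sᶜ, g y :=
        sum_congr rfl fun S hS => by rw [hg S (mem_filter.mp hS).2]
    _ = ∑ S : Finset ι, (∏ y ∈ S, a y) * ∏ y ∈ Sᶜ, g y := by
        rw [powerset_univ]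
        refine sum_filter_of_ne fun S _ hS => by_contra fun hx => hS ?_
        rw [Finset.prod_eq_zero (mem_compl.mpr hx) (show g x = 0 from if_pos rfl), mul_zero]
    _ = ∏ y, (a y + g y) := (Fintype.prod_add a g).symm
    _ = a x := by
        rw [Fintype.prod_eq_single x fun y hy => by simp [g, hy]]
        simp [g]

variable {R : Type*} [Field R]

theorem sum_filter_mem_inv_card_mul_prod_eq (a : ι → R) (x : ι) :
    ∑ S ∈ univ.powerset.filter (fun S : Finset ι => x ∈ S),
        ((S.card : R))⁻¹ * (∏ y ∈ S, a y) * ∏ y ∈ Sᶜ, (1 - a y)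
      = ((Fintype.card ι : R))⁻¹ * a x
        + ∑ S ∈ univ.powerset.filter (fun S : Finset ι => x ∈ S),
            (((S.card : R))⁻¹ - ((Fintype.card ι : R))⁻¹) *
              (∏ y ∈ S, a y) * ∏ y ∈ Sᶜ, (1 - a y) := by
  rw [← sum_filter_mem_prod_mul_prod_compl_one_sub a x, mul_sum, ← sum_add_distrib]
  exact sum_congr rfl fun S _ => by ring

theorem inv_card_sub_inv_card_mul_prod_nonneg [LinearOrder R] [IsStrictOrderedRing R]
    {a : ι → R} (ha₀ : ∀ y, 0 ≤ a y) (ha₁ : ∀ y, a y ≤ 1) {S : Finset ι} (hS : S.Nonempty) :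
    0 ≤ (((S.card : R))⁻¹ - ((Fintype.card ι : R))⁻¹) *
      (∏ y ∈ S, a y) * ∏ y ∈ Sᶜ, (1 - a y) := by
  have hcard : ((Fintype.card ι : R))⁻¹ ≤ ((S.card : R))⁻¹ :=
    inv_anti₀ (by exact_mod_cast hS.card_pos) (by exact_mod_cast card_le_univ S)
  have hprod₁ : 0 ≤ ∏ y ∈ S, a y := prod_nonneg fun y _ => ha₀ y
  have hprod₂ : 0 ≤ ∏ y ∈ Sᶜ, (1 - a y) := prod_nonneg fun y _ => sub_nonneg.mpr (ha₁ y)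
  exact mul_nonneg (mul_nonneg (sub_nonneg.mpr hcard) hprod₁) hprod₂

end BernoulliWeights

section DigitalAnnealer

variable {V : Type*} [DecidableEq V]

theorem flipConf_ne (σ : V → Bool) (x : V) : flipConf σ x ≠ σ := fun hσ => by
  simpa [flipConf] using congrFun hσ x

theorem flipConf_injective (σ : V → Bool) : Function.Injective (flipConf σ) := by
  intro x y hxy
  by_contra hne
  simpa [flipConf, Function.update_of_ne hne] using congrFun hxy x

variable [Fintype V]

theorem Pda_flipConf (J : V → V → ℝ) (h : V → ℝ) (β : ℝ) (σ : V → Bool) (x : V) :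
    Pda J h β σ (flipConf σ x)
      = ∑ S ∈ univ.powerset.filter (fun S : Finset V => x ∈ S),
          ((S.card : ℝ))⁻¹ * (∏ y ∈ S, acc J h β σ y) * ∏ y ∈ Sᶜ, (1 - acc J h β σ y) := by
  have hproposal : univ.filter (fun x' => flipConf σ x = flipConf σ x') = {x} := by
    ext x'
    simp [(flipConf_injective σ).eq_iff, eq_comm]
  rw [Pda, if_neg (flipConf_ne σ x), hproposal, sum_singleton]

theorem acc_nonneg (J : V → V → ℝ) (h : V → ℝ) (β : ℝ) (σ : V → Bool) (y : V) :
    0 ≤ acc J h β σ y :=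
  (Real.exp_pos _).le

theorem acc_le_one (J : V → V → ℝ) (h : V → ℝ) {β : ℝ} (hβ : 0 ≤ β) (σ : V → Bool) (y : V) :
    acc J h β σ y ≤ 1 := by
  rw [acc, Real.exp_le_one_iff, neg_mul, neg_nonpos]
  exact mul_nonneg hβ (le_max_right _ _)

end DigitalAnnealer

theorem Pda_flip_decomposition_general
    {V : Type*} [Fintype V] [DecidableEq V]
    (J : V → V → ℝ) (h : V → ℝ)
    (β : ℝ) (hβ : 0 < β) (σ : V → Bool) (x : V) :
    Pda J h β σ (flipConf σ x)
        = ((Fintype.card V : ℝ))⁻¹ * acc J h β σ x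
          + ∑ S ∈ Finset.univ.powerset.filter (fun S : Finset V => x ∈ S),
              (((S.card : ℝ))⁻¹ - ((Fintype.card V : ℝ))⁻¹) *
                (∏ y ∈ S, acc J h β σ y) * ∏ y ∈ Sᶜ, (1 - acc J h β σ y)
      ∧ 0 ≤ ∑ S ∈ Finset.univ.powerset.filter (fun S : Finset V => x ∈ S),
              (((S.card : ℝ))⁻¹ - ((Fintype.card V : ℝ))⁻¹) *
                (∏ y ∈ S, acc J h β σ y) * ∏ y ∈ Sᶜ, (1 - acc J h β σ y) := by
  refine ⟨(Pda_flipConf J h β σ x).trans (sum_filter_mem_inv_card_mul_prod_eq _ x),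
    sum_nonneg fun S hS => ?_⟩
  exact inv_card_sub_inv_card_mul_prod_nonneg (acc_nonneg J h β σ) (acc_le_one J h hβ.le σ)
    ⟨x, (mem_filter.mp hS).2⟩

theorem Pda_flip_decomposition
    {V : Type*} [Fintype V] [DecidableEq V] [Nonempty V]
    (J : V → V → ℝ) (h : V → ℝ)
    (hJsymm : ∀ x y, J x y = J y x) (hJdiag : ∀ x, J x x = 0)
    (β : ℝ) (hβ : 0 < β) (σ : V → Bool) (x : V) :
    Pda J h β σ (flipConf σ x)
        = ((Fintype.card V : ℝ))⁻¹ * acc J h β σ x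
          + ∑ S ∈ Finset.univ.powerset.filter (fun S : Finset V => x ∈ S),
              (((S.card : ℝ))⁻¹ - ((Fintype.card V : ℝ))⁻¹) *
                (∏ y ∈ S, acc J h β σ y) * ∏ y ∈ Sᶜ, (1 - acc J h β σ y)
      ∧ 0 ≤ ∑ S ∈ Finset.univ.powerset.filter (fun S : Finset V => x ∈ S),
              (((S.card : ℝ))⁻¹ - ((Fintype.card V : ℝ))⁻¹) *
                (∏ y ∈ S, acc J h β σ y) * ∏ y ∈ Sᶜ, (1 - acc J h β σ y) :=
  Pda_flip_decomposition_general J h β hβ σ x
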